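/- arXiv:2308.09218 — 2 statements merged into one kernel-verified Lean document; each statement's English description precedes it below -/
import Mathlib

section
/- Let Λ({0}) > 0 and θ > 0. If (E_j)_{j≥0} are independent exponential random variables where E_j has rate Λ({0}) * C(j+1, 2) + (j+1) * θ, then E[∑_{j=0}^∞ E_j] = ∑_{j=0}^∞ 1 / ((j+1) * (θ + Λ({0}) * j / 2)), and this equals (ψ(2θ/Λ({0})) + γ) / (θ − Λ({0})/2) when θ ≠ Λ({0})/2. -/
open MeasureTheory ProbabilityTheory

/-- The digamma function, the logarithmic derivative of the Gamma function. -/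
noncomputable def digamma (x : ℝ) : ℝ := deriv (fun y => Real.log (Real.Gamma y)) x

/-!
The rate of `E j` factors as `c * C(j+1, 2) + (j+1) θ = (j+1) (θ + c j / 2)`, and an exponential
variable of rate `r` is a.s. nonnegative with mean `1 / r`; so the series of the `E j` converges
absolutely in `L¹` and its expectation is the sum of the means.

For the closed form, write `x = 2θ / c`, so that the `j`-th mean is `(2 / c) / ((j+1) (j+x))`, and
`1 / (n+1) - 1 / (n+x) = (x-1) / ((n+1) (n+x))`. The series of the left-hand sides equals
`ψ(x) + γ`: its partial sums are `H_n - (ψ(x+n) - ψ(x))` by `ψ(y+1) = ψ(y) + 1/y`, while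
`H_n - log n → γ` and `ψ(x+n) - log n → 0`, the latter by the convexity of `log Γ`, which squeezes
`ψ(y) ≤ log y ≤ ψ(y+1)`.
-/

section Exponential

open Real Set

variable {r : ℝ}

lemma measurable_exponentialPDF (r : ℝ) : Measurable (exponentialPDF r) :=
  (measurable_exponentialPDFReal r).ennreal_ofReal

lemma ae_nonneg_expMeasure (r : ℝ) : ∀ᵐ x ∂expMeasure r, 0 ≤ x := by
  change ∀ᵐ x ∂volume.withDensity (exponentialPDF r), 0 ≤ x
  rw [ae_withDensity_iff (measurable_exponentialPDF r)]
  filter_upwards with x hx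
  by_contra! hneg
  exact hx (exponentialPDF_of_neg hneg)

lemma integral_Ioi_mul_exp_neg_mul (hr : 0 < r) :
    ∫ x in Ioi 0, x * exp (-(r * x)) = (r ^ 2)⁻¹ := by
  have h := integral_rpow_mul_exp_neg_mul_Ioi two_pos hr
  norm_num at h
  exact h

lemma lintegral_ofReal_expMeasure (hr : 0 < r) :
    ∫⁻ x, ENNReal.ofReal x ∂expMeasure r = ENNReal.ofReal (1 / r) := by
  have hdens (x : ℝ) : (exponentialPDF r * ENNReal.ofReal) x =
      (Ioi 0).indicator (fun x => ENNReal.ofReal (r * (x * exp (-(r * x))))) x := by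
    rw [Pi.mul_apply]
    rcases lt_or_ge 0 x with hx | hx
    · rw [indicator_of_mem (show x ∈ Ioi 0 from hx), exponentialPDF_of_nonneg hx.le,
        ← ENNReal.ofReal_mul (by positivity)]
      ring_nf
    · rw [indicator_of_notMem (show x ∉ Ioi 0 from not_lt.2 hx), ENNReal.ofReal_of_nonpos hx,
        mul_zero]
  have hint : IntegrableOn (fun x => x * exp (-(r * x))) (Ioi 0) :=
    .of_integral_ne_zero (by rw [integral_Ioi_mul_exp_neg_mul hr]; positivity)
  change ∫⁻ x, ENNReal.ofReal x ∂volume.withDensity (exponentialPDF r) = _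
  rw [lintegral_withDensity_eq_lintegral_mul _ (measurable_exponentialPDF r)
    ENNReal.measurable_ofReal, lintegral_congr hdens, lintegral_indicator measurableSet_Ioi,
    ← ofReal_integral_eq_lintegral_ofReal (hint.const_mul r), integral_const_mul,
    integral_Ioi_mul_exp_neg_mul hr]
  · field_simp
  · filter_upwards [ae_restrict_mem measurableSet_Ioi] with x hx
    exact mul_nonneg hr.le (mul_nonneg (le_of_lt hx) (exp_pos _).le)

lemma integral_id_expMeasure (hr : 0 < r) : ∫ x, x ∂expMeasure r = 1 / r := by
  rw [integral_eq_lintegral_of_nonneg_ae (ae_nonneg_expMeasure r) aestronglyMeasurable_id,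
    lintegral_ofReal_expMeasure hr, ENNReal.toReal_ofReal (by positivity)]

lemma lintegral_enorm_expMeasure (hr : 0 < r) :
    ∫⁻ x, ‖x‖ₑ ∂expMeasure r = ENNReal.ofReal (1 / r) := by
  rw [← lintegral_ofReal_expMeasure hr]
  refine lintegral_congr_ae ?_
  filter_upwards [ae_nonneg_expMeasure r] with x hx using Real.enorm_eq_ofReal hx

end Exponential

theorem integral_tsum_of_map_eq_expMeasure {Ω : Type*} [MeasurableSpace Ω] {P : Measure Ω}
    {X : ℕ → Ω → ℝ} {r : ℕ → ℝ} (hX : ∀ j, AEMeasurable (X j) P) (hr : ∀ j, 0 < r j)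
    (hlaw : ∀ j, P.map (X j) = expMeasure (r j)) (hsum : Summable fun j => 1 / r j) :
    ∫ ω, ∑' j, X j ω ∂P = ∑' j, 1 / r j := by
  have hlint (j : ℕ) : ∫⁻ ω, ‖X j ω‖ₑ ∂P = ENNReal.ofReal (1 / r j) := by
    rw [← lintegral_map' measurable_enorm.aemeasurable (hX j), hlaw,
      lintegral_enorm_expMeasure (hr j)]
  have hint (j : ℕ) : ∫ ω, X j ω ∂P = 1 / r j := by
    rw [← integral_map (f := fun x => x) (hX j) aestronglyMeasurable_id, hlaw,
      integral_id_expMeasure (hr j)]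
  have hfin : ∑' j, ∫⁻ ω, ‖X j ω‖ₑ ∂P ≠ ⊤ := by
    rw [tsum_congr hlint, ← ENNReal.ofReal_tsum_of_nonneg (fun j => (one_div_pos.2 (hr j)).le) hsum]
    exact ENNReal.ofReal_ne_top
  rw [integral_tsum (fun j => (hX j).aestronglyMeasurable) hfin, tsum_congr hint]

section Digamma

open Real Filter Topology Set

variable {x : ℝ}

lemma differentiableAt_log_Gamma (hx : 0 < x) :
    DifferentiableAt ℝ (fun y => log (Gamma y)) x :=
  (differentiableAt_Gamma fun m => ((neg_nonpos.2 m.cast_nonneg).trans_lt hx).ne').log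
    (Gamma_pos_of_pos hx).ne'

lemma log_Gamma_add_one (hx : 0 < x) : log (Gamma (x + 1)) = log (Gamma x) + log x := by
  rw [Gamma_add_one hx.ne', log_mul hx.ne' (Gamma_pos_of_pos hx).ne', add_comm]

lemma digamma_add_one (hx : 0 < x) : digamma (x + 1) = digamma x + x⁻¹ := by
  rw [digamma, ← deriv_comp_add_const, digamma, ← deriv_log,
    ← deriv_add (differentiableAt_log_Gamma hx) (differentiableAt_log hx.ne')]
  apply EventuallyEq.deriv_eq
  filter_upwards [eventually_gt_nhds hx] with y hy using log_Gamma_add_one hy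

lemma digamma_add_nat (hx : 0 < x) (n : ℕ) :
    digamma (x + n) = digamma x + ∑ k ∈ Finset.range n, (x + k)⁻¹ := by
  induction n with
  | zero => simp
  | succ n ih =>
    rw [Nat.cast_succ, ← add_assoc, digamma_add_one (by positivity), ih, Finset.sum_range_succ,
      add_assoc]

-- `log x` is the slope of the convex function `log ∘ Gamma` on `[x, x + 1]`.
lemma digamma_le_log (hx : 0 < x) : digamma x ≤ log x := by
  have h := convexOn_log_Gamma.deriv_le_slope (mem_Ioi.2 hx) (mem_Ioi.2 (by linarith : 0 < x + 1))
    (lt_add_one x) (differentiableAt_log_Gamma hx)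
  rwa [slope_def_field, add_sub_cancel_left, div_one, Function.comp_apply, Function.comp_apply,
    log_Gamma_add_one hx, add_sub_cancel_left] at h

lemma log_le_digamma_add_one (hx : 0 < x) : log x ≤ digamma (x + 1) := by
  have h := convexOn_log_Gamma.slope_le_deriv (mem_Ioi.2 hx) (mem_Ioi.2 (by linarith : 0 < x + 1))
    (lt_add_one x) (differentiableAt_log_Gamma (by linarith))
  rwa [slope_def_field, add_sub_cancel_left, div_one, Function.comp_apply, Function.comp_apply,
    log_Gamma_add_one hx, add_sub_cancel_left] at h

lemma tendsto_digamma_add_nat_sub_log (hx : 0 < x) :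
    Tendsto (fun n : ℕ => digamma (x + n) - log n) atTop (𝓝 0) := by
  have hlog (y : ℝ) : Tendsto (fun n : ℕ => log (n + y) - log n) atTop (𝓝 0) :=
    (tendsto_log_comp_add_sub_log y).comp tendsto_natCast_atTop_atTop
  refine tendsto_of_tendsto_of_tendsto_of_le_of_le' (hlog (x - 1)) (hlog x) ?_ ?_
  · filter_upwards [eventually_ge_atTop 1] with n hn
    have h := log_le_digamma_add_one (x := n + (x - 1)) (by
      have : (1 : ℝ) ≤ n := by exact_mod_cast hn
      linarith)
    rw [show (n : ℝ) + (x - 1) + 1 = x + n by ring] at h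
    exact sub_le_sub_right h _
  · filter_upwards with n
    rw [add_comm (n : ℝ)]
    exact sub_le_sub_right (digamma_le_log (by positivity)) _

lemma one_div_add_one_sub_one_div_add (n : ℕ) (hx : 0 < x) :
    1 / ((n : ℝ) + 1) - 1 / (n + x) = (x - 1) * (1 / ((n + 1) * (n + x))) := by
  field_simp
  ring

lemma summable_one_div_add_one_mul_add (hx : 0 < x) :
    Summable fun n : ℕ => 1 / (((n : ℝ) + 1) * (n + x)) := by
  have hsq : Summable fun n : ℕ => 1 / ((n : ℝ) + 1) ^ 2 := by
    simpa using (summable_nat_add_iff 1).2 (summable_one_div_nat_pow.2 one_lt_two)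
  refine (hsq.mul_left (1 + x⁻¹)).of_nonneg_of_le (fun n => by positivity) fun n => ?_
  have hn : (0 : ℝ) ≤ n := n.cast_nonneg
  have hle : (n : ℝ) + 1 ≤ (n + x) * (1 + x⁻¹) := by
    rw [mul_one_add, add_mul, mul_inv_cancel₀ hx.ne']
    nlinarith [mul_nonneg hn (inv_nonneg.2 hx.le)]
  rw [mul_one_div, div_le_div_iff₀ (by positivity) (by positivity)]
  nlinarith

theorem hasSum_digamma_add_eulerMascheroniConstant (hx : 0 < x) :
    HasSum (fun n : ℕ => 1 / ((n : ℝ) + 1) - 1 / (n + x)) (digamma x + eulerMascheroniConstant) := by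
  have hsum : Summable fun n : ℕ => 1 / ((n : ℝ) + 1) - 1 / (n + x) := by
    simpa only [one_div_add_one_sub_one_div_add _ hx] using
      (summable_one_div_add_one_mul_add hx).mul_left (x - 1)
  have hpartial (n : ℕ) : ∑ k ∈ Finset.range n, (1 / ((k : ℝ) + 1) - 1 / (k + x)) =
      digamma x + (harmonic n - log n) - (digamma (x + n) - log n) := by
    rw [Finset.sum_sub_distrib, digamma_add_nat hx, harmonic]
    push_cast
    simp only [one_div, add_comm x]
    ring
  refine (hsum.hasSum_iff_tendsto_nat).2 ?_
  simp only [hpartial]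
  simpa using ((tendsto_const_nhds (x := digamma x)).add tendsto_harmonic_sub_log).sub
    (tendsto_digamma_add_nat_sub_log hx)

theorem hasSum_one_div_add_one_mul_add (hx : 0 < x) (hx1 : x ≠ 1) :
    HasSum (fun n : ℕ => 1 / (((n : ℝ) + 1) * (n + x)))
      ((digamma x + eulerMascheroniConstant) / (x - 1)) := by
  have hx1' : x - 1 ≠ 0 := sub_ne_zero.2 hx1
  refine ((hasSum_digamma_add_eulerMascheroniConstant hx).div_const (x - 1)).congr_fun fun n => ?_
  rw [one_div_add_one_sub_one_div_add n hx, mul_div_cancel_left₀ _ hx1']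

end Digamma

theorem mean_sum_of_exponentials_general
    {Ω : Type*} [MeasurableSpace Ω] (P : Measure Ω)
    (c θ : ℝ) (hc : 0 < c) (hθ : 0 < θ)
    (E : ℕ → Ω → ℝ) (hmeas : ∀ j, Measurable (E j))
    (hdist : ∀ j : ℕ,
      P.map (E j) = expMeasure (c * ((j + 1).choose 2 : ℕ) + (j + 1 : ℝ) * θ)) :
    (∫ ω, ∑' j : ℕ, E j ω ∂P)
        = ∑' j : ℕ, 1 / ((j + 1 : ℝ) * (θ + c * (j : ℝ) / 2)) ∧
    (θ ≠ c / 2 →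
      ∑' j : ℕ, 1 / ((j + 1 : ℝ) * (θ + c * (j : ℝ) / 2))
        = (digamma (2 * θ / c) + Real.eulerMascheroniConstant) / (θ - c / 2)) := by
  have hx : 0 < 2 * θ / c := by positivity
  have hrate (j : ℕ) : c * ((j + 1).choose 2 : ℕ) + (j + 1 : ℝ) * θ =
      (j + 1 : ℝ) * (θ + c * (j : ℝ) / 2) := by
    rw [Nat.cast_choose_two]
    push_cast
    ring
  have hscale (j : ℕ) : 1 / ((j + 1 : ℝ) * (θ + c * (j : ℝ) / 2)) =
      2 / c * (1 / ((j + 1 : ℝ) * (j + 2 * θ / c))) := by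
    field_simp
    ring
  refine ⟨?_, fun hθc => ?_⟩
  · refine integral_tsum_of_map_eq_expMeasure (fun j => (hmeas j).aemeasurable)
      (fun j => by positivity) (fun j => (hdist j).trans (by rw [hrate])) ?_
    simpa only [hscale] using (summable_one_div_add_one_mul_add hx).mul_left (2 / c)
  · have hx1 : 2 * θ / c ≠ 1 := by
      rw [Ne, div_eq_one_iff_eq hc.ne']
      contrapose! hθc
      linarith
    rw [tsum_congr hscale, tsum_mul_left, (hasSum_one_div_add_one_mul_add hx hx1).tsum_eq]
    field_simp

theorem mean_sum_of_exponentials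
    {Ω : Type*} [MeasurableSpace Ω] (P : Measure Ω) [IsProbabilityMeasure P]
    (c θ : ℝ) (hc : 0 < c) (hθ : 0 < θ)
    (E : ℕ → Ω → ℝ) (hmeas : ∀ j, Measurable (E j))
    (hindep : iIndepFun E P)
    (hdist : ∀ j : ℕ,
      P.map (E j) = expMeasure (c * ((j + 1).choose 2 : ℕ) + (j + 1 : ℝ) * θ)) :
    (∫ ω, ∑' j : ℕ, E j ω ∂P)
        = ∑' j : ℕ, 1 / ((j + 1 : ℝ) * (θ + c * (j : ℝ) / 2)) ∧
    (θ ≠ c / 2 →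
      ∑' j : ℕ, 1 / ((j + 1 : ℝ) * (θ + c * (j : ℝ) / 2))
        = (digamma (2 * θ / c) + Real.eulerMascheroniConstant) / (θ - c / 2)) :=
  mean_sum_of_exponentials_general P c θ hc hθ E hmeas hdist
end

section
/- Let (Z_k)_{k≥1} be i.i.d. random variables taking values in [m] with P(Z_1 = i) = x(i) where x(i) > 0 and ∑ x(i) = 1 (m = d+1). Fix distinct i_1, ..., i_m ∈ [m] and let m_j = min{k : Z_k = i_j}. Then P(m_1 < m_2 < ... < m_m) = ∑_{n_2,...,n_m ≥ 0} x(i_1) ∏_{k=2}^m ( (∑_{l=1}^{k-1} x(i_l))^{n_k} x(i_k) ) = x(i_1) ∏_{k=2}^m x(i_k) / (1 − ∑_{l=1}^{k-1} x(i_l)). -/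
/-!
If the first hits of `σ 0, …, σ d` occur at times `0 = p 0 < p 1 < ⋯ < p d`, every draw up to
time `p d` is constrained: at `p k` it must be `σ k`, and strictly between `p k` and `p (k + 1)`
it must be one of `σ 0, …, σ k`, which has probability `A k = x (σ 0) + ⋯ + x (σ k) < 1`.
By independence this event has probability `x (σ 0) * ∏ k, A k ^ n k * x (σ (k + 1))`, where
`n k = p (k + 1) - p k - 1`, and these events partition the event that the first hits are in
order. As the gap vector `n` ranges over `Fin d → ℕ`, the sum factors into `d` geometric series.
-/

open MeasureTheory ProbabilityTheory Finset Function
open scoped ENNReal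

lemma ENNReal.tsum_fin_pi_prod {β : Type*} :
    ∀ {d : ℕ} (g : Fin d → β → ℝ≥0∞),
      ∑' n : Fin d → β, ∏ k, g k (n k) = ∏ k, ∑' j, g k j
  | 0, g => by simp
  | d + 1, g => by
    rw [← (Fin.consEquiv fun _ => β).tsum_eq, ENNReal.tsum_prod', Fin.prod_univ_succ,
      ← ENNReal.tsum_fin_pi_prod, ← ENNReal.tsum_mul_right]
    simp [Fin.consEquiv, Fin.prod_univ_succ, ENNReal.tsum_mul_left]

lemma hasSum_of_tsum_ofReal_eq {ι : Type*} {f : ι → ℝ} {c : ℝ} (hf : ∀ i, 0 ≤ f i)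
    (hc : 0 ≤ c) (h : ∑' i, ENNReal.ofReal (f i) = ENNReal.ofReal c) : HasSum f c := by
  have hsummable : Summable f :=
    (ENNReal.summable_toReal (h ▸ ENNReal.ofReal_ne_top)).congr
      fun i => ENNReal.toReal_ofReal (hf i)
  rwa [← ENNReal.ofReal_tsum_of_nonneg hf hsummable, ENNReal.ofReal_eq_ofReal_iff
    (tsum_nonneg hf) hc, ← hsummable.hasSum_iff] at h

lemma hasSum_prod_geometric {d : ℕ} {r b : Fin d → ℝ} (hr₀ : ∀ k, 0 ≤ r k)
    (hr₁ : ∀ k, r k < 1) (hb : ∀ k, 0 ≤ b k) :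
    HasSum (fun n : Fin d → ℕ => ∏ k, r k ^ n k * b k) (∏ k, b k / (1 - r k)) := by
  have hterm (n : Fin d → ℕ) (k : Fin d) : 0 ≤ r k ^ n k * b k :=
    mul_nonneg (pow_nonneg (hr₀ k) _) (hb k)
  have hsum (k : Fin d) : 0 ≤ b k / (1 - r k) := div_nonneg (hb k) (sub_nonneg.2 (hr₁ k).le)
  have hgeom (k : Fin d) :
      ∑' j : ℕ, ENNReal.ofReal (r k ^ j * b k) = ENNReal.ofReal (b k / (1 - r k)) := by
    simp_rw [ENNReal.ofReal_mul (pow_nonneg (hr₀ k) _), ENNReal.ofReal_pow (hr₀ k),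
      ENNReal.tsum_mul_right, ENNReal.tsum_geometric, div_eq_inv_mul,
      ENNReal.ofReal_mul (inv_nonneg.2 (sub_nonneg.2 (hr₁ k).le)),
      ENNReal.ofReal_inv_of_pos (sub_pos.2 (hr₁ k)), ENNReal.ofReal_sub _ (hr₀ k),
      ENNReal.ofReal_one]
  refine hasSum_of_tsum_ofReal_eq (fun n => prod_nonneg fun k _ => hterm n k)
    (prod_nonneg fun k _ => hsum k) ?_
  rw [ENNReal.ofReal_prod_of_nonneg fun k _ => hsum k, ← prod_congr rfl fun k _ => hgeom k,
    ← ENNReal.tsum_fin_pi_prod]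
  exact tsum_congr fun n => ENNReal.ofReal_prod_of_nonneg fun k _ => hterm n k

lemma prod_Ioc_eq_prod_prod_Ioc {M : Type*} [CommMonoid M] (f : ℕ → M) {d : ℕ}
    {p : Fin (d + 1) → ℕ} (hp : Monotone p) :
    ∏ t ∈ Ioc (p 0) (p (Fin.last d)), f t
      = ∏ k : Fin d, ∏ t ∈ Ioc (p k.castSucc) (p k.succ), f t := by
  induction d with
  | zero => simp
  | succ d ih =>
    have ih' := ih (p := p ∘ Fin.castSucc) (hp.comp fun _ _ h => h)
    simp only [comp_apply, Fin.castSucc_zero] at ih'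
    rw [Fin.prod_univ_castSucc]
    simp only [Fin.succ_castSucc]
    rw [← ih', ← Fin.succ_last, prod_Ioc_consecutive _ (hp (Fin.zero_le _))
      (hp (Fin.castSucc_le_succ _))]

-- `Fin.partialSum (n + 1)` is the increasing sequence starting at `0` with gaps
-- `p (k + 1) - p k - 1 = n k`.
lemma strictMono_partialSum_add_one {d : ℕ} (n : Fin d → ℕ) :
    StrictMono (Fin.partialSum (n + 1)) :=
  Fin.strictMono_iff_lt_succ.2 fun k => by simp [Fin.partialSum_succ]

lemma partialSum_add_one_succ_sub {d : ℕ} (n : Fin d → ℕ) (k : Fin d) :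
    Fin.partialSum (n + 1) k.succ - Fin.partialSum (n + 1) k.castSucc - 1 = n k := by
  simp [Fin.partialSum_succ]

lemma partialSum_add_one_injective {d : ℕ} :
    Injective fun n : Fin d → ℕ => Fin.partialSum (n + 1) := fun n n' h => by
  funext k
  rw [← partialSum_add_one_succ_sub n, ← partialSum_add_one_succ_sub n']
  simp only at h
  rw [h]

lemma exists_partialSum_add_one_eq {d : ℕ} {p : Fin (d + 1) → ℕ} (hp : StrictMono p)
    (h0 : p 0 = 0) : ∃ n : Fin d → ℕ, Fin.partialSum (n + 1) = p := by
  refine ⟨fun k => p k.succ - p k.castSucc - 1, funext fun j => ?_⟩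
  induction j using Fin.induction with
  | zero => simp [h0]
  | succ k ih =>
    have := hp (Fin.castSucc_lt_succ (i := k))
    simp only [Fin.partialSum_succ, ih, Pi.add_apply, Pi.one_apply]
    omega

section FirstHit

variable {α : Type*} {s : ℕ → α} {a : α} {t : ℕ}

noncomputable def firstHit (s : ℕ → α) (a : α) : ℕ := sInf {k | s k = a}

lemma firstHit_le (h : s t = a) : firstHit s a ≤ t := Nat.sInf_le h

lemma apply_firstHit (h : ∃ t, s t = a) : s (firstHit s a) = a := Nat.sInf_mem h

-- `firstHit s a = 0` when `a` never occurs (`sInf ∅ = 0`), a junk value shared with `s 0`.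
lemma exists_apply_eq_of_firstHit_injective (h : Injective (firstHit s)) (a : α) :
    ∃ t, s t = a := by
  by_contra hne
  have ha : firstHit s a = 0 := by
    have hempty : {k | s k = a} = ∅ := Set.eq_empty_of_forall_notMem fun t ht => hne ⟨t, ht⟩
    rw [firstHit, hempty, Nat.sInf_empty]
  exact hne ⟨0, h (ha.trans (Nat.le_zero.1 (firstHit_le rfl)).symm) ▸ rfl⟩

end FirstHit

section FirstHitsInOrder

variable {Ω α : Type*} {d : ℕ} {p : Fin (d + 1) → ℕ} {t : ℕ}

-- The indices `j` such that `σ j` may be drawn at time `t` when each `σ j` is first hit at `p j`.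
def admissible (p : Fin (d + 1) → ℕ) (t : ℕ) : Finset (Fin (d + 1)) :=
  if ∃ j, p j = t then ({j | p j = t} : Finset _) else ({j | p j < t} : Finset _)

lemma admissible_apply (hp : Injective p) (j : Fin (d + 1)) : admissible p (p j) = {j} := by
  ext l
  simp [admissible, hp.eq_iff]

lemma le_of_mem_admissible {j : Fin (d + 1)} (h : j ∈ admissible p t) : p j ≤ t := by
  unfold admissible at h
  split_ifs at h <;> simp only [mem_filter, mem_univ, true_and] at h <;> omega

lemma admissible_of_mem_Ioo (hp : StrictMono p) {k : Fin d}
    (ht : t ∈ Ioo (p k.castSucc) (p k.succ)) :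
    admissible p t = ({l : Fin (d + 1) | (l : ℕ) ≤ k} : Finset _) := by
  rw [mem_Ioo] at ht
  have hgap : ¬∃ j, p j = t := by
    rintro ⟨j, rfl⟩
    rw [hp.lt_iff_lt, hp.lt_iff_lt] at ht
    exact (Fin.castSucc_lt_iff_succ_le.1 ht.1).not_gt ht.2
  ext l
  suffices p l < t ↔ (l : ℕ) ≤ k by simpa [admissible, hgap]
  constructor
  · intro hl
    by_contra! hkl
    have := hp.monotone (Fin.le_def.2 (by simpa using hkl) : k.succ ≤ l)
    omega
  · intro hl
    exact (hp.monotone (Fin.le_def.2 (by simpa using hl) : l ≤ k.castSucc)).trans_lt ht.1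

lemma prod_Iic_admissible {M : Type*} [CommMonoid M] (hp : StrictMono p) (h0 : p 0 = 0)
    (g : Finset (Fin (d + 1)) → M) :
    ∏ t ∈ Iic (p (Fin.last d)), g (admissible p t)
      = g {0} * ∏ k : Fin d,
          g {l | (l : ℕ) ≤ k} ^ (p k.succ - p k.castSucc - 1) * g {k.succ} := by
  have hIic : Iic (p (Fin.last d)) = Icc (p 0) (p (Fin.last d)) := by rw [h0]; rfl
  rw [hIic, Icc_eq_cons_Ioc (hp.monotone (Fin.zero_le _)), prod_cons,
    admissible_apply hp.injective, prod_Ioc_eq_prod_prod_Ioc _ hp.monotone]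
  congr 1
  refine prod_congr rfl fun k _ => ?_
  rw [← Ioo_insert_right (hp Fin.castSucc_lt_succ), prod_insert right_notMem_Ioo,
    admissible_apply hp.injective,
    prod_congr rfl fun t ht => by rw [admissible_of_mem_Ioo hp ht],
    prod_const, Nat.card_Ioo, mul_comm]

lemma firstHit_comp_eq_iff (hp : StrictMono p) (σ : Fin (d + 1) ≃ α) (s : ℕ → α) :
    firstHit s ∘ σ = p ↔ ∀ t ≤ p (Fin.last d), σ.symm (s t) ∈ admissible p t := by
  constructor
  · intro h t _
    have hfirst (a : α) : firstHit s a = p (σ.symm a) := by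
      simpa using congrFun h (σ.symm a)
    have hinj : Injective (firstHit s) := by
      rw [funext hfirst]
      exact hp.injective.comp σ.symm.injective
    have hhit (j : Fin (d + 1)) : s (p j) = σ j := by
      simpa [hfirst] using apply_firstHit (exists_apply_eq_of_firstHit_injective hinj (σ j))
    by_cases ht : ∃ j, p j = t
    · obtain ⟨j, rfl⟩ := ht
      simp [hhit, admissible_apply hp.injective]
    · have hle : p (σ.symm (s t)) ≤ t := hfirst (s t) ▸ firstHit_le rfl
      simpa [admissible, ht] using lt_of_le_of_ne hle fun h => ht ⟨_, h⟩
  · intro h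
    funext j
    have hhit : s (p j) = σ j := σ.symm_apply_eq.1 <| by
      simpa [admissible_apply hp.injective] using h (p j) (hp.monotone (Fin.le_last j))
    refine (firstHit_le hhit).antisymm ?_
    have hle := (firstHit_le hhit).trans (hp.monotone (Fin.le_last j))
    simpa [apply_firstHit ⟨_, hhit⟩] using le_of_mem_admissible (h _ hle)

lemma strictMono_firstHit_comp_iff (σ : Fin (d + 1) ≃ α) (s : ℕ → α) :
    StrictMono (firstHit s ∘ σ)
      ↔ ∃ n : Fin d → ℕ, firstHit s ∘ σ = Fin.partialSum (n + 1) := by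
  refine ⟨fun h => ?_, fun ⟨n, hn⟩ => hn ▸ strictMono_partialSum_add_one n⟩
  have h0 : firstHit s (σ 0) = 0 := by
    have := h.monotone (Fin.zero_le (σ.symm (s 0)))
    simp only [comp_apply, Equiv.apply_symm_apply] at this
    exact Nat.le_zero.1 (this.trans (firstHit_le rfl))
  obtain ⟨n, hn⟩ := exists_partialSum_add_one_eq h h0
  exact ⟨n, hn.symm⟩

lemma setOf_firstHit_comp_eq (hp : StrictMono p) (σ : Fin (d + 1) ≃ α) (Z : ℕ → Ω → α) :
    {ω | firstHit (fun k => Z k ω) ∘ σ = p}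
      = ⋂ t ∈ Iic (p (Fin.last d)), Z t ⁻¹' ↑((admissible p t).map σ.toEmbedding) := by
  ext ω
  simp [firstHit_comp_eq_iff hp]

lemma measurableSet_setOf_firstHit_comp_eq [MeasurableSpace Ω] [MeasurableSpace α]
    [MeasurableSingletonClass α] {Z : ℕ → Ω → α} (hmeas : ∀ k, Measurable (Z k))
    (hp : StrictMono p) (σ : Fin (d + 1) ≃ α) :
    MeasurableSet {ω | firstHit (fun k => Z k ω) ∘ σ = p} := by
  rw [setOf_firstHit_comp_eq hp]
  exact Finset.measurableSet_biInter _ fun t _ => hmeas t (Finset.measurableSet _)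

lemma measure_setOf_firstHit_comp_eq [MeasurableSpace Ω] [MeasurableSpace α]
    [MeasurableSingletonClass α] {P : Measure Ω} {Z : ℕ → Ω → α}
    (hmeas : ∀ k, Measurable (Z k)) (hindep : iIndepFun Z P)
    (hp : StrictMono p) (σ : Fin (d + 1) ≃ α) :
    P {ω | firstHit (fun k => Z k ω) ∘ σ = p}
      = ∏ t ∈ Iic (p (Fin.last d)), ∑ j ∈ admissible p t, P (Z t ⁻¹' {σ j}) := by
  rw [setOf_firstHit_comp_eq hp,
    hindep.meas_biInter fun t _ => ⟨_, (admissible p t).map _ |>.measurableSet, rfl⟩]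
  refine prod_congr rfl fun t _ => ?_
  rw [← sum_measure_preimage_singleton _ fun a _ => hmeas t (measurableSet_singleton a), sum_map]
  rfl

lemma measure_setOf_firstHit_comp_eq_partialSum [MeasurableSpace Ω] [MeasurableSpace α]
    [MeasurableSingletonClass α] {P : Measure Ω} {Z : ℕ → Ω → α}
    (hmeas : ∀ k, Measurable (Z k)) (hindep : iIndepFun Z P) {x : α → ℝ}
    (hx : ∀ a, 0 ≤ x a) (hdist : ∀ k a, P {ω | Z k ω = a} = ENNReal.ofReal (x a))
    (σ : Fin (d + 1) ≃ α) (n : Fin d → ℕ) :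
    P {ω | firstHit (fun k => Z k ω) ∘ σ = Fin.partialSum (n + 1)}
      = ENNReal.ofReal (x (σ 0) * ∏ k : Fin d,
          (∑ l ∈ univ.filter (fun l : Fin (d + 1) => (l : ℕ) ≤ k), x (σ l)) ^ n k
            * x (σ k.succ)) := by
  have hp := strictMono_partialSum_add_one n
  have hZ (t : ℕ) (a : α) : P (Z t ⁻¹' {a}) = ENNReal.ofReal (x a) := hdist t a
  have hA (k : Fin d) :
      0 ≤ ∑ l ∈ univ.filter (fun l : Fin (d + 1) => (l : ℕ) ≤ k), x (σ l) :=
    sum_nonneg fun l _ => hx _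
  simp only [measure_setOf_firstHit_comp_eq hmeas hindep hp σ, hZ]
  rw [prod_Iic_admissible hp (Fin.partialSum_zero _)
    fun F => ∑ j ∈ F, ENNReal.ofReal (x (σ j))]
  simp_rw [partialSum_add_one_succ_sub, sum_singleton, ENNReal.ofReal_mul (hx _),
    ENNReal.ofReal_prod_of_nonneg fun k _ => mul_nonneg (pow_nonneg (hA k) _) (hx _),
    ENNReal.ofReal_mul (pow_nonneg (hA _) _), ENNReal.ofReal_pow (hA _),
    ENNReal.ofReal_sum_of_nonneg fun l _ => hx (σ l)]

lemma setOf_strictMono_firstHit_comp_eq_iUnion (σ : Fin (d + 1) ≃ α) (Z : ℕ → Ω → α) :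
    {ω | StrictMono (firstHit (fun k => Z k ω) ∘ σ)}
      = ⋃ n : Fin d → ℕ, {ω | firstHit (fun k => Z k ω) ∘ σ = Fin.partialSum (n + 1)} :=
  Set.ext fun ω => by
    rw [Set.mem_iUnion]
    exact strictMono_firstHit_comp_iff σ fun k => Z k ω

end FirstHitsInOrder

lemma sum_filter_val_le_lt_one {d : ℕ} {w : Fin (d + 1) → ℝ} (hw : ∀ i, 0 < w i)
    (hw₁ : ∑ i, w i = 1) (k : Fin d) :
    ∑ l ∈ univ.filter (fun l : Fin (d + 1) => (l : ℕ) ≤ k), w l < 1 :=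
  hw₁ ▸ sum_lt_sum_of_subset (filter_subset _ _) (mem_univ k.succ) (by simp) (hw _)
    fun l _ _ => (hw l).le

theorem first_occurrence_order_prob_general
    {Ω : Type*} [MeasurableSpace Ω] (P : Measure Ω)
    (d : ℕ)
    (x : Fin (d + 1) → ℝ) (hx : ∀ i, 0 < x i) (hsum : ∑ i, x i = 1)
    (Z : ℕ → Ω → Fin (d + 1)) (hmeas : ∀ k, Measurable (Z k))
    (hindep : iIndepFun Z P)
    (hdist : ∀ k i, P {ω | Z k ω = i} = ENNReal.ofReal (x i))
    (σ : Equiv.Perm (Fin (d + 1))) :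
    P {ω | StrictMono fun j : Fin (d + 1) => sInf {k : ℕ | Z k ω = σ j}}
        = ENNReal.ofReal (∑' n : Fin d → ℕ,
            x (σ 0) * ∏ k : Fin d,
              ((∑ l ∈ Finset.univ.filter (fun l : Fin (d + 1) => (l : ℕ) ≤ (k : ℕ)),
                  x (σ l)) ^ (n k) * x (σ k.succ))) ∧
    (∑' n : Fin d → ℕ,
        x (σ 0) * ∏ k : Fin d,
          ((∑ l ∈ Finset.univ.filter (fun l : Fin (d + 1) => (l : ℕ) ≤ (k : ℕ)),
              x (σ l)) ^ (n k) * x (σ k.succ)))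
      = x (σ 0) * ∏ k : Fin d,
          x (σ k.succ)
            / (1 - ∑ l ∈ Finset.univ.filter (fun l : Fin (d + 1) => (l : ℕ) ≤ (k : ℕ)),
                x (σ l)) := by
  have hx₀ (i : Fin (d + 1)) : 0 ≤ x i := (hx i).le
  have hA₀ (k : Fin d) :
      0 ≤ ∑ l ∈ univ.filter (fun l : Fin (d + 1) => (l : ℕ) ≤ k), x (σ l) :=
    sum_nonneg fun l _ => hx₀ _
  have hA₁ := sum_filter_val_le_lt_one (fun i => hx (σ i)) ((Equiv.sum_comp σ x).trans hsum)
  have hHasSum := (hasSum_prod_geometric hA₀ hA₁ fun k => hx₀ (σ k.succ)).mul_left (x (σ 0))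
  refine ⟨?_, hHasSum.tsum_eq⟩
  have hdisj : Pairwise (Disjoint on fun n : Fin d → ℕ =>
      {ω | firstHit (fun k => Z k ω) ∘ σ = Fin.partialSum (n + 1)}) :=
    (pairwise_disjoint_fiber _).comp_of_injective partialSum_add_one_injective
  rw [show {ω | StrictMono fun j : Fin (d + 1) => sInf {k : ℕ | Z k ω = σ j}} = _ from
      setOf_strictMono_firstHit_comp_eq_iUnion σ Z,
    measure_iUnion hdisj fun n => measurableSet_setOf_firstHit_comp_eq hmeas
      (strictMono_partialSum_add_one n) σ,
    tsum_congr (measure_setOf_firstHit_comp_eq_partialSum hmeas hindep hx₀ hdist σ),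
    ENNReal.ofReal_tsum_of_nonneg (fun n => ?_) hHasSum.summable]
  exact mul_nonneg (hx₀ _) (prod_nonneg fun k _ => mul_nonneg (pow_nonneg (hA₀ k) _) (hx₀ _))

theorem first_occurrence_order_prob
    {Ω : Type*} [MeasurableSpace Ω] (P : Measure Ω) [IsProbabilityMeasure P]
    (d : ℕ) (hd : 1 ≤ d)
    (x : Fin (d + 1) → ℝ) (hx : ∀ i, 0 < x i) (hsum : ∑ i, x i = 1)
    (Z : ℕ → Ω → Fin (d + 1)) (hmeas : ∀ k, Measurable (Z k))
    (hindep : iIndepFun Z P)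
    (hdist : ∀ k i, P {ω | Z k ω = i} = ENNReal.ofReal (x i))
    (σ : Equiv.Perm (Fin (d + 1))) :
    P {ω | StrictMono fun j : Fin (d + 1) => sInf {k : ℕ | Z k ω = σ j}}
        = ENNReal.ofReal (∑' n : Fin d → ℕ,
            x (σ 0) * ∏ k : Fin d,
              ((∑ l ∈ Finset.univ.filter (fun l : Fin (d + 1) => (l : ℕ) ≤ (k : ℕ)),
                  x (σ l)) ^ (n k) * x (σ k.succ))) ∧
    (∑' n : Fin d → ℕ,
        x (σ 0) * ∏ k : Fin d,
          ((∑ l ∈ Finset.univ.filter (fun l : Fin (d + 1) => (l : ℕ) ≤ (k : ℕ)),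
              x (σ l)) ^ (n k) * x (σ k.succ)))
      = x (σ 0) * ∏ k : Fin d,
          x (σ k.succ)
            / (1 - ∑ l ∈ Finset.univ.filter (fun l : Fin (d + 1) => (l : ℕ) ≤ (k : ℕ)),
                x (σ l)) :=
  first_occurrence_order_prob_general P d x hx hsum Z hmeas hindep hdist σ
end
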